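/- arXiv:1703.04648 — 2 statements merged into one kernel-verified Lean document; each statement's English description precedes it below -/
import Mathlib

section
/- Define a₀ := {∅} and aₙ₊₁ := {∅, aₙ}. For every natural number k, setting Y := { aₗ : ℓ < k } and Z := { aₗ : ℓ ≤ k }, the sets Y and Z satisfy {∅} ⊗ ({∅} ∪ Y) = Z and Y ⊊ Z. -/
/-- Unordered Cartesian product: `A ⊗ B = { {a,b} : a ∈ A, b ∈ B }`. -/
def ZFSet.uprod (A B : ZFSet) : ZFSet :=
  ZFSet.sep (fun z => ∃ a ∈ A, ∃ b ∈ B, z = {a, b}) (ZFSet.powerset (A ∪ B))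

/-- The sequence `a₀ = {∅}`, `aₙ₊₁ = {∅, aₙ}`. -/
def aseq : ℕ → ZFSet
  | 0 => {∅}
  | n + 1 => {∅, aseq n}

def upto : ℕ → ZFSet
  | 0 => ∅
  | n + 1 => insert (aseq n) (upto n)

lemma mem_upto (n : ℕ) (t : ZFSet) : t ∈ upto n ↔ ∃ l < n, t = aseq l := by
  induction n with
  | zero => simp [upto]
  | succ n ih =>
    simp only [upto, ZFSet.mem_insert_iff, ih]
    constructor
    · rintro (rfl | ⟨l, hl, rfl⟩)
      · exact ⟨n, Nat.lt_succ_self n, rfl⟩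
      · exact ⟨l, Nat.lt_succ_of_lt hl, rfl⟩
    · rintro ⟨l, hl, rfl⟩
      rcases Nat.lt_succ_iff_lt_or_eq.mp hl with h | rfl
      · exact Or.inr ⟨l, h, rfl⟩
      · exact Or.inl rfl

lemma empty_mem_aseq (n : ℕ) : (∅ : ZFSet) ∈ aseq n := by
  cases n <;> simp [aseq]

lemma aseq_ne_empty (n : ℕ) : aseq n ≠ ∅ := by
  intro h
  exact ZFSet.notMem_empty _ (h ▸ empty_mem_aseq n)

lemma aseq_injective : Function.Injective aseq := by
  intro m
  induction m with
  | zero =>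
    intro n h
    cases n with
    | zero => rfl
    | succ n =>
      exfalso
      have : aseq n ∈ ({∅} : ZFSet) := by
        rw [show ({∅} : ZFSet) = aseq 0 from rfl, h]
        simp [aseq]
      rw [ZFSet.mem_singleton] at this
      exact aseq_ne_empty n this
  | succ m ih =>
    intro n h
    cases n with
    | zero =>
      exfalso
      have : aseq m ∈ ({∅} : ZFSet) := by
        rw [show ({∅} : ZFSet) = aseq 0 from rfl, ← h]
        simp [aseq]
      rw [ZFSet.mem_singleton] at this
      exact aseq_ne_empty m this
    | succ n =>
      have h' : ({∅, aseq m} : ZFSet) = {∅, aseq n} := h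
      have hm : aseq m ∈ ({∅, aseq n} : ZFSet) := by rw [← h']; simp
      rw [ZFSet.mem_insert_iff, ZFSet.mem_singleton] at hm
      rcases hm with hm | hm
      · exact absurd hm (aseq_ne_empty m)
      · exact congrArg Nat.succ (ih hm)

lemma mem_uprod {A B z : ZFSet} : z ∈ ZFSet.uprod A B ↔ ∃ a ∈ A, ∃ b ∈ B, z = {a, b} := by
  rw [ZFSet.uprod, ZFSet.mem_sep]
  constructor
  · exact fun h => h.2
  · rintro ⟨a, ha, b, hb, rfl⟩
    refine ⟨?_, a, ha, b, hb, rfl⟩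
    rw [ZFSet.mem_powerset]
    intro x hx
    rw [ZFSet.mem_insert_iff, ZFSet.mem_singleton] at hx
    rcases hx with rfl | rfl
    · exact ZFSet.mem_union.mpr (Or.inl ha)
    · exact ZFSet.mem_union.mpr (Or.inr hb)

theorem stmt_4 (k : ℕ) :
    ∃ Y Z : ZFSet,
      (∀ t : ZFSet, t ∈ Y ↔ ∃ l < k, t = aseq l) ∧
      (∀ t : ZFSet, t ∈ Z ↔ ∃ l ≤ k, t = aseq l) ∧
      ZFSet.uprod {∅} ({∅} ∪ Y) = Z ∧ Y ⊆ Z ∧ Y ≠ Z := by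
  refine ⟨upto k, upto (k + 1), mem_upto k, ?_, ?_, ?_, ?_⟩
  · intro t
    rw [mem_upto]
    simp [Nat.lt_succ_iff]
  · apply ZFSet.ext
    intro t
    rw [mem_uprod, mem_upto]
    constructor
    · rintro ⟨a, ha, b, hb, rfl⟩
      rw [ZFSet.mem_singleton] at ha
      subst ha
      rw [ZFSet.mem_union, ZFSet.mem_singleton, mem_upto] at hb
      rcases hb with rfl | ⟨l, hl, rfl⟩
      · exact ⟨0, Nat.succ_pos k, by simp [aseq]⟩
      · exact ⟨l + 1, Nat.succ_lt_succ hl, rfl⟩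
    · rintro ⟨l, hl, rfl⟩
      cases l with
      | zero =>
        refine ⟨∅, ZFSet.mem_singleton.mpr rfl, ∅, ?_, by simp [aseq]⟩
        exact ZFSet.mem_union.mpr (Or.inl (ZFSet.mem_singleton.mpr rfl))
      | succ l =>
        refine ⟨∅, ZFSet.mem_singleton.mpr rfl, aseq l, ?_, rfl⟩
        exact ZFSet.mem_union.mpr (Or.inr ((mem_upto k _).mpr ⟨l, Nat.lt_of_succ_lt_succ hl, rfl⟩))
  · intro t ht
    rw [mem_upto] at ht ⊢
    obtain ⟨l, hl, rfl⟩ := ht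
    exact ⟨l, Nat.lt_succ_of_lt hl, rfl⟩
  · intro h
    have hk : aseq k ∈ upto (k + 1) := (mem_upto _ _).mpr ⟨k, Nat.lt_succ_self k, rfl⟩
    rw [← h, mem_upto] at hk
    obtain ⟨l, hl, he⟩ := hk
    exact absurd (aseq_injective he).symm (Nat.ne_of_lt hl)
end

section
/- The formula φ(y,z) := ({∅} ⊗ ({∅} ∪ y) = z ∧ y ⊊ z) admits models of every sufficiently large finite rank but no infinite model: every pair (Y,Z) satisfying φ has Z of finite rank, and for every n ∈ ω there is a satisfying pair (Y,Z) with rank(Z) > n. In particular sup{ rank(Z) : (Y,Z) satisfies φ } = ω. -/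
/-- The formula `φ(y,z) := {∅} ⊗ ({∅} ∪ y) = z ∧ y ⊊ z`. -/
def phi (Y Z : ZFSet) : Prop :=
  ZFSet.uprod {∅} ({∅} ∪ Y) = Z ∧ Y ⊆ Z ∧ Y ≠ Z

/-!
If `φ(Y, Z)` holds, then `Z` consists of the sets `{∅, b}` with `b ∈ {∅} ∪ Y`, and `Y ⊆ Z`.
By `∈`-induction every element of `{∅} ∪ Y` is then a term `c n` of the chain
`c 0 = ∅`, `c (n + 1) = {∅, c n}`, which has `rank (c n) = n`, and `{∅} ∪ Y` is closed under
predecessors along the chain. If it contained the whole chain we would get `Z ⊆ Y`, so it is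
contained in some `{c 0, …, c (N - 1)}` and `rank Z ≤ N + 1`. Conversely
`Y = {c 1, …, c n}`, `Z = {c 1, …, c (n + 1)}` satisfies `φ` with `rank Z = n + 2`.
-/

open Function Order

universe u

namespace ZFSet

theorem mem_uprod {A B z : ZFSet} : z ∈ uprod A B ↔ ∃ a ∈ A, ∃ b ∈ B, z = {a, b} := by
  refine mem_sep.trans ⟨And.right, fun hz => ⟨?_, hz⟩⟩
  obtain ⟨a, ha, b, hb, rfl⟩ := hz
  refine mem_powerset.2 fun w hw => ?_
  rcases mem_pair.1 hw with rfl | rfl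
  exacts [mem_union.2 (.inl ha), mem_union.2 (.inr hb)]

theorem mem_uprod_singleton {x B z : ZFSet} : z ∈ uprod {x} B ↔ ∃ b ∈ B, z = {x, b} := by
  simp only [mem_uprod, mem_singleton, exists_eq_left]

theorem pair_right_injective (a : ZFSet) : Injective fun b : ZFSet => ({a, b} : ZFSet) := by
  intro b c (hbc : ({a, b} : ZFSet) = {a, c})
  have hb : b ∈ ({a, c} : ZFSet) := hbc ▸ mem_pair.2 (.inr rfl)
  rcases mem_pair.1 hb with rfl | rfl
  · have hc : c ∈ ({b, b} : ZFSet) := hbc ▸ mem_pair.2 (.inr rfl)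
    rw [pair_eq_singleton, mem_singleton] at hc
    exact hc.symm
  · rfl

theorem rank_pair_empty (b : ZFSet) : rank {∅, b} = succ (rank b) := by
  rw [rank_pair, rank_empty]
  exact max_eq_right (succ_le_succ zero_le)

noncomputable def pairChain (n : ℕ) : ZFSet := (fun b : ZFSet => {∅, b})^[n] ∅

@[simp]
theorem pairChain_zero : pairChain 0 = ∅ := rfl

theorem pairChain_succ (n : ℕ) : pairChain (n + 1) = {∅, pairChain n} :=
  iterate_succ_apply' _ _ _

@[simp]
theorem rank_pairChain (n : ℕ) : rank (pairChain n) = n := by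
  induction n with
  | zero => exact rank_empty
  | succ n ih => rw [pairChain_succ, rank_pair_empty, ih, succ_eq_add_one, Nat.cast_succ]

theorem pairChain_injective : Injective pairChain := fun m n h => by
  simpa using congrArg rank h

theorem pairChain_succ_ne_empty (n : ℕ) : pairChain (n + 1) ≠ ∅ := fun h => by
  simpa using congrArg rank h

end ZFSet

open ZFSet

namespace phi

variable {Y Z : ZFSet}

theorem mem_iff (h : phi Y Z) {z : ZFSet} : z ∈ Z ↔ ∃ b ∈ {∅} ∪ Y, z = {∅, b} := by
  rw [← h.1, mem_uprod_singleton]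

theorem exists_eq_pairChain (h : phi Y Z) {b : ZFSet} (hb : b ∈ {∅} ∪ Y) :
    ∃ n, b = pairChain n := by
  induction b using inductionOn with
  | _ b ih =>
    rcases mem_union.1 hb with hb | hb
    · exact ⟨0, mem_singleton.1 hb⟩
    · obtain ⟨b', hb', rfl⟩ := h.mem_iff.1 (h.2.1 hb)
      obtain ⟨n, rfl⟩ := ih b' (mem_pair.2 (.inr rfl)) hb'
      exact ⟨n + 1, (pairChain_succ n).symm⟩

theorem pairChain_mem_of_succ_mem (h : phi Y Z) {n : ℕ}
    (hn : pairChain (n + 1) ∈ {∅} ∪ Y) : pairChain n ∈ {∅} ∪ Y := by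
  have hY : pairChain (n + 1) ∈ Y :=
    (mem_union.1 hn).resolve_left (mt mem_singleton.1 (pairChain_succ_ne_empty n))
  obtain ⟨b, hb, hnb⟩ := h.mem_iff.1 (h.2.1 hY)
  rw [pairChain_succ] at hnb
  rwa [pair_right_injective _ hnb]

theorem pairChain_mem_of_le (h : phi Y Z) {m n : ℕ} (hmn : m ≤ n)
    (hn : pairChain n ∈ {∅} ∪ Y) : pairChain m ∈ {∅} ∪ Y := by
  induction n, hmn using Nat.le_induction with
  | base => exact hn
  | succ n _ ih => exact ih (h.pairChain_mem_of_succ_mem hn)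

theorem exists_pairChain_notMem (h : phi Y Z) : ∃ N, pairChain N ∉ {∅} ∪ Y := by
  by_contra! hall
  refine h.2.2 (ext fun z => ⟨fun hz => h.2.1 hz, fun hz => ?_⟩)
  obtain ⟨b, hb, rfl⟩ := h.mem_iff.1 hz
  obtain ⟨n, rfl⟩ := h.exists_eq_pairChain hb
  rw [← pairChain_succ]
  exact (mem_union.1 (hall (n + 1))).resolve_left
    (mt mem_singleton.1 (pairChain_succ_ne_empty n))

theorem rank_lt_omega0 (h : phi Y Z) : Z.rank < Ordinal.omega0 := by
  obtain ⟨N, hN⟩ := h.exists_pairChain_notMem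
  have hZ : Z.rank ≤ (N + 1 : ℕ) := by
    refine rank_le_iff.2 fun z hz => ?_
    obtain ⟨b, hb, rfl⟩ := h.mem_iff.1 hz
    obtain ⟨m, rfl⟩ := h.exists_eq_pairChain hb
    have hmN : m < N := lt_of_not_ge fun hNm => hN (h.pairChain_mem_of_le hNm hb)
    rw [← pairChain_succ, rank_pairChain]
    exact_mod_cast Nat.succ_lt_succ hmN
  exact hZ.trans_lt (Ordinal.natCast_lt_omega0 _)

end phi

namespace ZFSet

noncomputable def pairChainSet (n : ℕ) : ZFSet.{u} := range fun i : Fin n => pairChain (i + 1)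

theorem mem_pairChainSet {n : ℕ} {y : ZFSet} :
    y ∈ pairChainSet n ↔ ∃ i < n, pairChain (i + 1) = y := by
  simp only [pairChainSet, mem_range, Fin.exists_iff, exists_prop]

theorem phi_pairChainSet (n : ℕ) : phi (pairChainSet n) (pairChainSet (n + 1)) := by
  refine ⟨ext fun z => ?_, fun y hy => ?_, fun heq => ?_⟩
  · rw [mem_uprod_singleton, mem_pairChainSet]
    constructor
    · rintro ⟨b, hb, rfl⟩
      rcases mem_union.1 hb with hb | hb
      · exact ⟨0, n.succ_pos, by rw [pairChain_succ, mem_singleton.1 hb, pairChain_zero]⟩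
      · obtain ⟨i, hi, rfl⟩ := mem_pairChainSet.1 hb
        exact ⟨i + 1, Nat.succ_lt_succ hi, pairChain_succ _⟩
    · rintro ⟨i, hi, rfl⟩
      refine ⟨pairChain i, ?_, pairChain_succ i⟩
      cases i with
      | zero => exact mem_union.2 (.inl (mem_singleton.2 rfl))
      | succ i => exact mem_union.2 (.inr (mem_pairChainSet.2 ⟨i, Nat.lt_of_succ_lt_succ hi, rfl⟩))
  · obtain ⟨i, hi, rfl⟩ := mem_pairChainSet.1 hy
    exact mem_pairChainSet.2 ⟨i, hi.trans n.lt_succ_self, rfl⟩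
  · obtain ⟨i, hi, hin⟩ :=
      mem_pairChainSet.1 (heq ▸ mem_pairChainSet.2 ⟨n, n.lt_succ_self, rfl⟩)
    exact hi.ne (Nat.succ_injective (pairChain_injective hin))

theorem lt_rank_pairChainSet_succ (n : ℕ) : (n : Ordinal) < rank (pairChainSet (n + 1)) := by
  have hmem : pairChain (n + 1) ∈ pairChainSet (n + 1) :=
    mem_pairChainSet.2 ⟨n, n.lt_succ_self, rfl⟩
  calc (n : Ordinal) < (n + 1 : ℕ) := by exact_mod_cast n.lt_succ_self
    _ = rank (pairChain (n + 1)) := (rank_pairChain _).symm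
    _ < rank (pairChainSet (n + 1)) := rank_lt_of_mem hmem

end ZFSet

theorem stmt_5 :
    (∀ Y Z : ZFSet, phi Y Z → Z.rank < Ordinal.omega0) ∧
    (∀ n : ℕ, ∃ Y Z : ZFSet, phi Y Z ∧ (n : Ordinal) < Z.rank) ∧
    sSup {o : Ordinal | ∃ Y Z : ZFSet, phi Y Z ∧ Z.rank = o} = Ordinal.omega0 := by
  refine ⟨fun _ _ h => h.rank_lt_omega0,
    fun n => ⟨_, _, phi_pairChainSet n, lt_rank_pairChainSet_succ n⟩,
    csSup_eq_of_forall_le_of_forall_lt_exists_gt ?_ ?_ ?_⟩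
  · exact ⟨_, _, _, phi_pairChainSet 0, rfl⟩
  · rintro _ ⟨Y, Z, h, rfl⟩
    exact h.rank_lt_omega0.le
  · intro w hw
    obtain ⟨n, rfl⟩ := Ordinal.lt_omega0.1 hw
    exact ⟨_, ⟨_, _, phi_pairChainSet n, rfl⟩, lt_rank_pairChainSet_succ n⟩
end
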